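/- For every real k > 0 and every real g ∈ (0, 1/4), the following inequalities hold in the extended nonnegative reals [0, ∞]: (φ(W(g)−1)²/W(g)) · ∑_{m=0}^∞ (k·(W(g)−1))^m ≤ ∑_{m=0}^∞ k^m·W_m(g) ≤ ∑_{m=0}^∞ (k·(W(g)−1))^m, where all three series have nonnegative terms and are interpreted as sums in [0, ∞]. -/

import Mathlib

/-- The sequence `X_m(g)` defined by `X_0 = 1`, `X_{m+1} = 1/(1 - g X_m)`. -/
noncomputable def Xseq (g : ℝ) : ℕ → ℝ
  | 0 => 1
  | m + 1 => 1 / (1 - g * Xseq g m)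

/-- The fixed-height partition functions `W_0(g) = 1`, `W_m(g) = X_m(g) - X_{m-1}(g)` for `m ≥ 1`. -/
noncomputable def Wseq (g : ℝ) : ℕ → ℝ
  | 0 => 1
  | m + 1 => Xseq g (m + 1) - Xseq g m

/-- The tree partition function `W(g) = (1 - √(1-4g))/(2g)`. -/
noncomputable def Wfun (g : ℝ) : ℝ := (1 - Real.sqrt (1 - 4 * g)) / (2 * g)

/-- Euler's function `φ(q) = ∏_{i=1}^∞ (1 - q^i)`. -/
noncomputable def eulerPhi (q : ℝ) : ℝ := ∏' i : ℕ, (1 - q ^ (i + 1))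

/-!
Put `q = W(g) - 1 ∈ (0, 1)`, so that `g = q / (1 + q)²`. In this parameter the recursion solves
to `X_m = (1 + q)(1 - q^(m+1)) / (1 - q^(m+2))`, whence
`W_m = (1 + q)(1 - q)² q^m / ((1 - q^(m+1))(1 - q^(m+2)))`. The denominator lies between
`(1 - q)(1 - q²) = (1 + q)(1 - q)²` and `1`, so `(1 + q)(1 - q)² q^m ≤ W_m ≤ q^m`, and both bounds
of the theorem follow termwise, using `0 ≤ φ(q) ≤ 1 - q` for the lower one.
-/

section Wfun

variable {g : ℝ}

lemma Wfun_eq_two_div (hg0 : 0 < g) (hg1 : g ≤ 1 / 4) :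
    Wfun g = 2 / (1 + Real.sqrt (1 - 4 * g)) := by
  have hs : Real.sqrt (1 - 4 * g) ^ 2 = 1 - 4 * g := Real.sq_sqrt (by linarith)
  rw [Wfun, div_eq_div_iff (by positivity) (by positivity)]
  linear_combination -hs

lemma one_lt_Wfun (hg0 : 0 < g) (hg1 : g ≤ 1 / 4) : 1 < Wfun g := by
  have hs : Real.sqrt (1 - 4 * g) < 1 := by
    rw [Real.sqrt_lt' one_pos]
    linarith
  rw [Wfun_eq_two_div hg0 hg1, lt_div_iff₀ (by positivity)]
  linarith

lemma Wfun_lt_two (hg0 : 0 < g) (hg1 : g < 1 / 4) : Wfun g < 2 := by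
  have hs : 0 < Real.sqrt (1 - 4 * g) := Real.sqrt_pos.mpr (by linarith)
  rw [Wfun_eq_two_div hg0 hg1.le, div_lt_iff₀ (by positivity)]
  linarith

lemma mul_Wfun_sq (hg0 : 0 < g) (hg1 : g ≤ 1 / 4) : g * Wfun g ^ 2 = Wfun g - 1 := by
  rw [Wfun_eq_two_div hg0 hg1]
  set s := Real.sqrt (1 - 4 * g)
  have hs : s ^ 2 = 1 - 4 * g := Real.sq_sqrt (by linarith)
  have hs0 : 0 ≤ s := Real.sqrt_nonneg _
  field_simp
  linear_combination hs

end Wfun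

section ClosedForm

variable {q : ℝ}

lemma one_sub_pow_pos (hq0 : 0 ≤ q) (hq1 : q < 1) {n : ℕ} (hn : n ≠ 0) : 0 < 1 - q ^ n :=
  sub_pos.mpr (pow_lt_one₀ hq0 hq1 hn)

lemma Xseq_eq (hq0 : 0 ≤ q) (hq1 : q < 1) (m : ℕ) :
    Xseq (q / (1 + q) ^ 2) m = (1 + q) * (1 - q ^ (m + 1)) / (1 - q ^ (m + 2)) := by
  have h1q : 0 < 1 + q := by linarith
  induction m with
  | zero =>
    have h2 := one_sub_pow_pos hq0 hq1 two_ne_zero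
    rw [Xseq]
    field_simp
    ring
  | succ m ih =>
    have h2 := one_sub_pow_pos hq0 hq1 (n := m + 2) (by omega)
    have h3 := one_sub_pow_pos hq0 hq1 (n := m + 3) (by omega)
    have hden : 1 - q / (1 + q) ^ 2 * ((1 + q) * (1 - q ^ (m + 1)) / (1 - q ^ (m + 2))) =
        (1 - q ^ (m + 3)) / ((1 + q) * (1 - q ^ (m + 2))) := by
      field_simp
      ring
    rw [Xseq, ih, hden, one_div_div]

lemma Wseq_eq (hq0 : 0 ≤ q) (hq1 : q < 1) (m : ℕ) :
    Wseq (q / (1 + q) ^ 2) m =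
      (1 + q) * (1 - q) ^ 2 * q ^ m / ((1 - q ^ (m + 1)) * (1 - q ^ (m + 2))) := by
  have h1 := one_sub_pow_pos hq0 hq1 (n := m + 1) (by omega)
  have h2 := one_sub_pow_pos hq0 hq1 (n := m + 2) (by omega)
  cases m with
  | zero =>
    rw [Wseq]
    field_simp
    ring
  | succ m =>
    have h3 := one_sub_pow_pos hq0 hq1 (n := m + 3) (by omega)
    rw [Wseq, Xseq_eq hq0 hq1, Xseq_eq hq0 hq1]
    field_simp
    ring

lemma Wseq_le_pow (hq0 : 0 ≤ q) (hq1 : q < 1) (m : ℕ) : Wseq (q / (1 + q) ^ 2) m ≤ q ^ m := by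
  have h1 := one_sub_pow_pos hq0 hq1 (n := m + 1) (by omega)
  have h2 := one_sub_pow_pos hq0 hq1 (n := m + 2) (by omega)
  have hden : (1 - q) * (1 - q ^ 2) ≤ (1 - q ^ (m + 1)) * (1 - q ^ (m + 2)) := by
    have hq2 := one_sub_pow_pos hq0 hq1 two_ne_zero
    have hm1 : q ^ (m + 1) ≤ q ^ 1 := pow_le_pow_of_le_one hq0 hq1.le (by omega)
    have hm2 : q ^ (m + 2) ≤ q ^ 2 := pow_le_pow_of_le_one hq0 hq1.le (by omega)
    rw [pow_one] at hm1
    gcongr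
  rw [Wseq_eq hq0 hq1, div_le_iff₀ (by positivity)]
  calc (1 + q) * (1 - q) ^ 2 * q ^ m = (1 - q) * (1 - q ^ 2) * q ^ m := by ring
    _ ≤ (1 - q ^ (m + 1)) * (1 - q ^ (m + 2)) * q ^ m := by gcongr
    _ = q ^ m * ((1 - q ^ (m + 1)) * (1 - q ^ (m + 2))) := by ring

lemma mul_pow_le_Wseq (hq0 : 0 ≤ q) (hq1 : q < 1) (m : ℕ) :
    (1 + q) * (1 - q) ^ 2 * q ^ m ≤ Wseq (q / (1 + q) ^ 2) m := by
  have h1 := one_sub_pow_pos hq0 hq1 (n := m + 1) (by omega)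
  have h2 := one_sub_pow_pos hq0 hq1 (n := m + 2) (by omega)
  have hden : (1 - q ^ (m + 1)) * (1 - q ^ (m + 2)) ≤ 1 :=
    mul_le_one₀ (by linarith [pow_nonneg hq0 (m + 1)]) h2.le
      (by linarith [pow_nonneg hq0 (m + 2)])
  rw [Wseq_eq hq0 hq1, le_div_iff₀ (by positivity)]
  have hnum : 0 ≤ (1 + q) * (1 - q) ^ 2 * q ^ m := by
    have : 0 ≤ 1 + q := by linarith
    positivity
  exact mul_le_of_le_one_right hnum hden

end ClosedForm

section EulerPhi

variable {q : ℝ}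

lemma multipliable_one_sub_pow_add (hq0 : 0 ≤ q) (hq1 : q < 1) (k : ℕ) :
    Multipliable fun n : ℕ => 1 - q ^ (n + k) := by
  have hs : Summable fun n : ℕ => ‖-q ^ (n + k)‖ := by
    simpa [abs_of_nonneg hq0] using
      (summable_nat_add_iff k).mpr (summable_geometric_of_lt_one hq0 hq1)
  simpa [sub_eq_add_neg] using multipliable_one_add_of_summable hs

lemma tprod_one_sub_pow_add_le_one (hq0 : 0 ≤ q) (hq1 : q < 1) (k : ℕ) :
    ∏' n : ℕ, (1 - q ^ (n + k)) ≤ 1 :=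
  (multipliable_one_sub_pow_add hq0 hq1 k).tprod_le_of_prod_range_le fun _ =>
    Finset.prod_le_one (fun _ _ => sub_nonneg.mpr (pow_le_one₀ hq0 hq1.le))
      (fun _ _ => sub_le_self _ (pow_nonneg hq0 _))

lemma eulerPhi_nonneg (hq0 : 0 ≤ q) (hq1 : q ≤ 1) : 0 ≤ eulerPhi q :=
  tprod_nonneg fun _ => sub_nonneg.mpr (pow_le_one₀ hq0 hq1)

lemma eulerPhi_le_one_sub (hq0 : 0 ≤ q) (hq1 : q < 1) : eulerPhi q ≤ 1 - q := by
  have hsplit := tprod_eq_zero_mul' (f := fun n : ℕ => 1 - q ^ (n + 1))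
    (multipliable_one_sub_pow_add hq0 hq1 2)
  simp only [zero_add, pow_one] at hsplit
  rw [eulerPhi, hsplit]
  exact mul_le_of_le_one_right (by linarith) (tprod_one_sub_pow_add_le_one hq0 hq1 2)

lemma eulerPhi_sq_div_le (hq0 : 0 ≤ q) (hq1 : q < 1) :
    eulerPhi q ^ 2 / (1 + q) ≤ (1 + q) * (1 - q) ^ 2 := by
  have hφ : eulerPhi q ^ 2 ≤ (1 - q) ^ 2 :=
    pow_le_pow_left₀ (eulerPhi_nonneg hq0 hq1.le) (eulerPhi_le_one_sub hq0 hq1) 2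
  rw [div_le_iff₀ (by linarith)]
  nlinarith [sq_nonneg (1 - q), mul_nonneg hq0 (sq_nonneg (1 - q))]

end EulerPhi

/-- For `k > 0` and `g ∈ (0,1/4)`, in `[0,∞]`:
`(φ(W-1)²/W) ∑ (k(W-1))^m ≤ ∑ k^m W_m ≤ ∑ (k(W-1))^m`. -/
theorem stmt_7 (k : ℝ) (hk : 0 < k) (g : ℝ) (hg0 : 0 < g) (hg1 : g < 1/4) :
    ENNReal.ofReal (eulerPhi (Wfun g - 1) ^ 2 / Wfun g) *
        (∑' m : ℕ, ENNReal.ofReal ((k * (Wfun g - 1)) ^ m))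
      ≤ ∑' m : ℕ, ENNReal.ofReal (k ^ m * Wseq g m) ∧
    (∑' m : ℕ, ENNReal.ofReal (k ^ m * Wseq g m))
      ≤ ∑' m : ℕ, ENNReal.ofReal ((k * (Wfun g - 1)) ^ m) := by
  set q := Wfun g - 1
  have hq0 : 0 < q := by linarith [one_lt_Wfun hg0 hg1.le]
  have hq1 : q < 1 := by linarith [Wfun_lt_two hg0 hg1]
  have hW : Wfun g = 1 + q := by ring
  have hg : g = q / (1 + q) ^ 2 := by
    rw [eq_div_iff (by positivity), ← hW, mul_Wfun_sq hg0 hg1.le]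
  rw [hW, hg]
  constructor
  · rw [← ENNReal.tsum_mul_left]
    refine ENNReal.tsum_le_tsum fun m => ?_
    rw [← ENNReal.ofReal_mul (by positivity)]
    refine ENNReal.ofReal_le_ofReal ?_
    calc eulerPhi q ^ 2 / (1 + q) * (k * q) ^ m
        = k ^ m * (eulerPhi q ^ 2 / (1 + q) * q ^ m) := by rw [mul_pow]; ring
      _ ≤ k ^ m * ((1 + q) * (1 - q) ^ 2 * q ^ m) := by
        gcongr
        exact eulerPhi_sq_div_le hq0.le hq1
      _ ≤ k ^ m * Wseq (q / (1 + q) ^ 2) m := by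
        gcongr
        exact mul_pow_le_Wseq hq0.le hq1 m
  · refine ENNReal.tsum_le_tsum fun m => ENNReal.ofReal_le_ofReal ?_
    rw [mul_pow]
    gcongr
    exact Wseq_le_pow hq0.le hq1 m
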